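/- arXiv:1711.06771 — 4 statements merged into one kernel-verified Lean document; each statement's English description precedes it below -/
import Mathlib

section
/- For the fractional repetition code with r columns sampled uniformly without replacement, for every nonnegative integer α: P(err(A) ≤ αs) ≥ 1 − C(k/s, α+1) · C(k−(α+1)s, r) / C(k, r). -/
open scoped Classical

/-- Optimal decoding error: `err(A) = inf_x ‖A x − 1‖₂²`. -/
noncomputable def decErr {m n : Type*} [Fintype m] [Fintype n] (A : Matrix m n ℝ) : ℝ :=
  ⨅ x : n → ℝ, ∑ i, (A.mulVec x i - 1) ^ 2

/-!
If the columns `S` are sampled, give each sampled column the weight `1 / c`, where `c` is the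
number of sampled columns in its block: then `A x` is `1` on every row of a block that meets `S`
and `0` on the other rows, so `err(A) ≤ s · #(blocks missed by S)`. A sample with
`err(A) > α s` therefore misses some `α + 1` blocks, and a union bound over those
`C(k/s, α+1)` sets of blocks, each missed by exactly `C(k - (α+1)s, r)` samples, gives the bound.
-/

open Finset

section Blocks

variable {ι β : Type*} [Fintype ι] [DecidableEq β] (f : ι → β)

theorem decErr_blockMatrix_le (S : Finset ι) :
    decErr (fun (i : ι) (j : {x : ι // x ∈ S}) => if f i = f j.1 then (1 : ℝ) else 0)
      ≤ #{i | f i ∉ S.image f} := by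
  set c : β → ℕ := fun b => #{j ∈ S | f j = b}
  have hmulVec (i : ι) :
      Matrix.mulVec (fun (i : ι) (j : {x : ι // x ∈ S}) => if f i = f j.1 then (1 : ℝ) else 0)
        (fun j => (c (f j.1) : ℝ)⁻¹) i = c (f i) * (c (f i) : ℝ)⁻¹ := by
    calc ∑ j : {x : ι // x ∈ S}, (if f i = f j.1 then (1 : ℝ) else 0) * (c (f j.1) : ℝ)⁻¹
        = ∑ j ∈ S, if f j = f i then (c (f i) : ℝ)⁻¹ else 0 := by
          rw [← sum_coe_sort S]
          refine sum_congr rfl fun j _ => ?_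
          by_cases h : f j.1 = f i
          · simp [h]
          · simp [h, Ne.symm h]
      _ = c (f i) * (c (f i) : ℝ)⁻¹ := by rw [← sum_filter, sum_const, nsmul_eq_mul]
  have hresidual (i : ι) : ((c (f i) : ℝ) * (c (f i) : ℝ)⁻¹ - 1) ^ 2
      = if f i ∉ S.image f then 1 else 0 := by
    have : c (f i) = 0 ↔ f i ∉ S.image f := by simp [c, filter_eq_empty_iff]
    by_cases h : c (f i) = 0
    · simp [h, this.1 h]
    · rw [mul_inv_cancel₀ (Nat.cast_ne_zero.2 h : (c (f i) : ℝ) ≠ 0), if_neg (this.not.1 h)]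
      norm_num
  refine (ciInf_le ⟨0, ?_⟩ fun j => (c (f j.1) : ℝ)⁻¹).trans_eq ?_
  · rintro _ ⟨x, rfl⟩
    positivity
  · simp_rw [hmulVec, hresidual, sum_boole]

variable {f} {B : Finset β} {s : ℕ}

theorem card_filter_mem_eq_card_mul (hfiber : ∀ b ∈ B, #{i | f i = b} = s) {T : Finset β}
    (hT : T ⊆ B) : #{i | f i ∈ T} = #T * s := by
  rw [card_eq_sum_card_fiberwise (s := {i | f i ∈ T}) (t := T) fun i hi => (mem_filter.1 hi).2]
  calc ∑ b ∈ T, #{i ∈ ({i | f i ∈ T} : Finset ι) | f i = b}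
      = ∑ _b ∈ T, s := sum_congr rfl fun b hb => by
        rw [filter_filter, ← hfiber b (hT hb)]
        congr 1
        ext i
        simp only [mem_filter, mem_univ, true_and, and_iff_right_iff_imp]
        rintro rfl
        exact hb
    _ = #T * s := by rw [sum_const, smul_eq_mul]

theorem card_filter_notMem_image_eq (hfiber : ∀ b ∈ B, #{i | f i = b} = s) (hf : ∀ i, f i ∈ B)
    (S : Finset ι) : #{i | f i ∉ S.image f} = #(B \ S.image f) * s := by
  rw [← card_filter_mem_eq_card_mul hfiber sdiff_subset]
  congr 1
  ext i
  simp [hf i]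

theorem card_filter_le_card_sdiff_image_le (hfiber : ∀ b ∈ B, #{i | f i = b} = s) (m r : ℕ) :
    #{S ∈ powersetCard r univ | m ≤ #(B \ S.image f)}
      ≤ (#B).choose m * (Fintype.card ι - m * s).choose r := by
  have hmiss (T) (hT : T ∈ B.powersetCard m) : #{i | f i ∉ T} = Fintype.card ι - m * s := by
    rw [mem_powersetCard] at hT
    have hsplit := card_filter_add_card_filter_not (s := univ) (fun i => f i ∈ T)
    rw [card_filter_mem_eq_card_mul hfiber hT.1, hT.2, card_univ] at hsplit
    omega
  calc #{S ∈ powersetCard r univ | m ≤ #(B \ S.image f)}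
      ≤ #((B.powersetCard m).biUnion fun T => powersetCard r {i | f i ∉ T}) := by
        refine card_le_card fun S hS => ?_
        obtain ⟨hSr, hm⟩ := mem_filter.1 hS
        obtain ⟨T, hTsub, hTcard⟩ := exists_subset_card_eq hm
        refine mem_biUnion.2 ⟨T, mem_powersetCard.2 ⟨hTsub.trans sdiff_subset, hTcard⟩, ?_⟩
        refine mem_powersetCard.2 ⟨fun i hi => ?_, (mem_powersetCard.1 hSr).2⟩
        exact mem_filter.2
          ⟨mem_univ i, fun hiT => (mem_sdiff.1 (hTsub hiT)).2 (mem_image_of_mem f hi)⟩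
    _ ≤ ∑ T ∈ B.powersetCard m, #(powersetCard r {i | f i ∉ T}) := card_biUnion_le
    _ = ∑ _T ∈ B.powersetCard m, (Fintype.card ι - m * s).choose r :=
        sum_congr rfl fun T hT => by rw [card_powersetCard, hmiss T hT]
    _ = (#B).choose m * (Fintype.card ι - m * s).choose r := by
        rw [sum_const, card_powersetCard, smul_eq_mul]

theorem choose_le_card_filter_decErr_le_add (hfiber : ∀ b ∈ B, #{i | f i = b} = s)
    (hf : ∀ i, f i ∈ B) (α r : ℕ) :
    (Fintype.card ι).choose r
      ≤ #{S ∈ powersetCard r univ | decErr (fun (i : ι) (j : {x : ι // x ∈ S}) =>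
          if f i = f j.1 then (1 : ℝ) else 0) ≤ α * s}
        + (#B).choose (α + 1) * (Fintype.card ι - (α + 1) * s).choose r := by
  have hbad : {S ∈ powersetCard r (univ : Finset ι) |
      ¬ decErr (fun (i : ι) (j : {x : ι // x ∈ S}) => if f i = f j.1 then (1 : ℝ) else 0) ≤ α * s}
        ⊆ {S ∈ powersetCard r (univ : Finset ι) | α + 1 ≤ #(B \ S.image f)} := by
    refine monotone_filter_right _ fun S _ hbad => ?_
    by_contra! hfew
    refine hbad ((decErr_blockMatrix_le f S).trans ?_)
    rw [card_filter_notMem_image_eq hfiber hf, Nat.cast_mul]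
    gcongr
    exact_mod_cast Nat.lt_succ_iff.1 hfew
  have hsplit := card_filter_add_card_filter_not (s := powersetCard r (univ : Finset ι))
    fun S => decErr (fun (i : ι) (j : {x : ι // x ∈ S}) => if f i = f j.1 then (1 : ℝ) else 0)
      ≤ α * s
  rw [card_powersetCard, card_univ] at hsplit
  have hbad_le := (card_le_card hbad).trans (card_filter_le_card_sdiff_image_le hfiber (α + 1) r)
  omega

end Blocks

theorem Fin.card_filter_val_div_eq {k s b : ℕ} (hs : 0 < s) (hdvd : s ∣ k) (hb : b < k / s) :
    #{i : Fin k | (i : ℕ) / s = b} = s := by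
  have hbk : b * s + s ≤ k := by
    have := Nat.mul_le_mul_right s hb
    rwa [Nat.div_mul_cancel hdvd, Nat.succ_mul] at this
  rw [← card_map Fin.valEmbedding]
  convert Nat.card_Ico (b * s) (b * s + s) using 2
  · ext n
    simp only [mem_map, mem_filter, mem_univ, true_and, Fin.valEmbedding_apply, mem_Ico,
      Nat.div_eq_iff hs]
    constructor
    · rintro ⟨i, hi, rfl⟩
      omega
    · intro hn
      exact ⟨⟨n, by omega⟩, by simp only; omega, rfl⟩
  · omega

theorem stmt6 (k s r α : ℕ) (hs : 0 < s) (hdvd : s ∣ k) (hrk : r ≤ k)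
    (G : Matrix (Fin k) (Fin k) ℝ)
    (hG : ∀ i j, G i j = if (i : ℕ) / s = (j : ℕ) / s then 1 else 0) :
    ((Finset.univ.powersetCard r).filter (fun S =>
        decErr (fun (i : Fin k) (j : {x : Fin k // x ∈ S}) => G i j.1) ≤ α * s)).card
        / (Nat.choose k r : ℝ)
      ≥ 1 - (Nat.choose (k / s) (α + 1) : ℝ) * (Nat.choose (k - (α + 1) * s) r)
          / (Nat.choose k r) := by
  have hbound := choose_le_card_filter_decErr_le_add (f := fun i : Fin k => (i : ℕ) / s)
    (B := range (k / s)) (fun b hb => Fin.card_filter_val_div_eq hs hdvd (mem_range.1 hb))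
    (fun i => mem_range.2 (Nat.div_lt_div_of_lt_of_dvd hdvd i.2)) α r
  rw [card_range, Fintype.card_fin] at hbound
  have hchoose : (0 : ℝ) < k.choose r := by exact_mod_cast Nat.choose_pos hrk
  simp only [hG]
  rw [ge_iff_le, sub_le_iff_le_add, ← add_div, le_div_iff₀ hchoose, one_mul]
  exact_mod_cast hbound
end

section
/- Let A ∈ ℝ^{k×r} and ν ≥ ‖A‖₂². Define u₀ = 1_k and u_t = (I − AAᵀ/ν) u_{t−1}. Then for all t, ‖u_t‖₂² ≥ err(A), and lim_{t→∞} ‖u_t‖₂² = err(A), where err(A) = min_x ‖Ax − 1_k‖₂². -/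
/-!
Write `T` for `A` as an operator `ℝʳ → ℝᵏ`, `P` for the orthogonal projection onto `range T` and
`S = 1 - ν⁻¹ T Tᵀ`, so that `u_t = Sᵗ 1`. The vector `1 - P 1` lies in `(range T)ᗮ = ker Tᵀ`, where
`S` is the identity, while `S` maps `range T` into itself. Hence `u_t = (1 - P 1) + Sᵗ (P 1)` is an
orthogonal decomposition and `‖u_t‖² = err(A) + ‖Sᵗ (P 1)‖²`. Since `ν ≥ ‖T‖²`, one step of `S`
decreases `‖x‖²` by at least `ν⁻¹ ‖Tᵀ x‖²`, and in finite dimension `Tᵀ` is bounded below on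
`range T`, so `S` is a strict contraction there and `Sᵗ (P 1) → 0`.
-/

open Matrix

/-- Spectral (ℓ2 operator) norm of a real matrix. -/
noncomputable def specNorm {m n : Type*} [Fintype m] [Fintype n] (A : Matrix m n ℝ) : ℝ :=
  ⨆ x : {x : n → ℝ // ∑ i, x i ^ 2 ≤ 1}, Real.sqrt (∑ i, (A.mulVec x.1 i) ^ 2)

open Filter Topology
open scoped InnerProduct RealInnerProductSpace

lemma tendsto_iterate_zero_of_norm_le_mul {V : Type*} [SeminormedAddCommGroup V] {f : V → V}
    {s : Set V} {ρ : ℝ} (hs : Set.MapsTo f s s) (hf : ∀ x ∈ s, ‖f x‖ ≤ ρ * ‖x‖) (hρ₀ : 0 ≤ ρ)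
    (hρ₁ : ρ < 1) {x : V} (hx : x ∈ s) : Tendsto (fun n ↦ f^[n] x) atTop (𝓝 0) := by
  have hgeom : ∀ n, ‖f^[n] x‖ ≤ ρ ^ n * ‖x‖ := by
    intro n
    induction n with
    | zero => simp
    | succ n ih =>
      rw [Function.iterate_succ_apply', pow_succ', mul_assoc]
      exact (hf _ (hs.iterate n hx)).trans (mul_le_mul_of_nonneg_left ih hρ₀)
  refine squeeze_zero_norm hgeom ?_
  simpa using (tendsto_pow_atTop_nhds_zero_of_lt_one hρ₀ hρ₁).mul_const ‖x‖

lemma iInf_norm_apply_sub_sq {E F : Type*} [NormedAddCommGroup E] [InnerProductSpace ℝ E]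
    [AddCommGroup F] [Module ℝ F] (T : F →ₗ[ℝ] E) [(LinearMap.range T).HasOrthogonalProjection]
    (y : E) : ⨅ x, ‖T x - y‖ ^ 2 = ‖y - (LinearMap.range T).starProjection y‖ ^ 2 := by
  set K := LinearMap.range T
  refine IsGLB.ciInf_eq (IsLeast.isGLB ⟨?_, ?_⟩)
  · obtain ⟨x, hx⟩ := K.starProjection_apply_mem y
    exact ⟨x, show ‖T x - y‖ ^ 2 = _ by rw [hx, norm_sub_rev]⟩
  · rintro _ ⟨x, rfl⟩
    have hperp : ⟪T x - K.starProjection y, y - K.starProjection y⟫ = 0 :=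
      K.inner_right_of_mem_orthogonal
        (K.sub_mem (LinearMap.mem_range_self T x) (K.starProjection_apply_mem y))
        (K.sub_starProjection_mem_orthogonal y)
    have hpyth : ‖T x - y‖ ^ 2 =
        ‖T x - K.starProjection y‖ ^ 2 + ‖y - K.starProjection y‖ ^ 2 := by
      rw [← sub_sub_sub_cancel_right (T x) y (K.starProjection y), norm_sub_sq_real, hperp]
      ring
    show _ ≤ ‖T x - y‖ ^ 2
    rw [hpyth]
    exact le_add_of_nonneg_left (sq_nonneg _)

section Landweber

variable {E F : Type*} [NormedAddCommGroup E] [InnerProductSpace ℝ E] [CompleteSpace E]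
  [NormedAddCommGroup F] [InnerProductSpace ℝ F] [CompleteSpace F]

/-- For `T = A`, the iterates `Sᵗ 1` of this map are the residuals `1 - A xₜ` of the Landweber
iteration `xₜ₊₁ = xₜ + ν⁻¹ Aᵀ (1 - A xₜ)`, `x₀ = 0`, for the least-squares problem `A x ≈ 1`. -/
noncomputable def landweberStep (T : F →L[ℝ] E) (ν : ℝ) : E →L[ℝ] E := 1 - ν⁻¹ • T ∘L T†

variable {T : F →L[ℝ] E} {ν : ℝ}

lemma landweberStep_apply (x : E) : landweberStep T ν x = x - ν⁻¹ • T ((T†) x) := rfl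

lemma landweberStep_apply_of_mem_orthogonal {x : E} (hx : x ∈ T.rangeᗮ) :
    landweberStep T ν x = x := by
  rw [T.orthogonal_range, LinearMap.mem_ker] at hx
  simp [landweberStep_apply, show (T†) x = 0 from hx]

lemma landweberStep_mem_range {x : E} (hx : x ∈ T.range) : landweberStep T ν x ∈ T.range :=
  T.range.sub_mem hx (T.range.smul_mem _ ⟨_, rfl⟩)

lemma norm_landweberStep_sq_le (hν : ‖T‖ ^ 2 ≤ ν) (x : E) :
    ‖landweberStep T ν x‖ ^ 2 ≤ ‖x‖ ^ 2 - ν⁻¹ * ‖(T†) x‖ ^ 2 := by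
  have hν₀ : 0 ≤ ν := (sq_nonneg _).trans hν
  have hinner : ⟪x, T ((T†) x)⟫ = ‖(T†) x‖ ^ 2 := by
    rw [← T.adjoint_inner_left, real_inner_self_eq_norm_sq]
  have hTT : ν⁻¹ ^ 2 * ‖T ((T†) x)‖ ^ 2 ≤ ν⁻¹ * ‖(T†) x‖ ^ 2 :=
    calc ν⁻¹ ^ 2 * ‖T ((T†) x)‖ ^ 2 ≤ ν⁻¹ ^ 2 * (‖T‖ ^ 2 * ‖(T†) x‖ ^ 2) := by
          gcongr
          rw [← mul_pow]
          exact pow_le_pow_left₀ (norm_nonneg _) (T.le_opNorm _) 2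
      _ ≤ ν⁻¹ ^ 2 * (ν * ‖(T†) x‖ ^ 2) := by gcongr
      _ = ν⁻¹ * ‖(T†) x‖ ^ 2 := by
          rcases hν₀.eq_or_lt with rfl | hν₀
          · simp
          · field_simp
  rw [landweberStep_apply, norm_sub_sq_real, real_inner_smul_right, hinner, norm_smul, mul_pow,
    Real.norm_eq_abs, sq_abs]
  linarith

lemma exists_mul_norm_le_norm_adjoint_apply [FiniteDimensional ℝ E] (T : F →L[ℝ] E) :
    ∃ c > 0, ∀ x ∈ T.range, c * ‖x‖ ≤ ‖(T†) x‖ := by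
  have hker : LinearMap.ker ((T† : E →ₗ[ℝ] F).domRestrict T.range) = ⊥ := by
    refine LinearMap.ker_eq_bot'.mpr fun x hx ↦ Subtype.ext ?_
    have hx' : (x : E) ∈ T.rangeᗮ := by
      rw [T.orthogonal_range]
      exact hx
    exact Submodule.disjoint_def.mp T.range.orthogonal_disjoint x x.2 hx'
  obtain ⟨K, -, hK⟩ := LinearMap.exists_antilipschitzWith _ hker
  obtain ⟨c, hc, hcT⟩ := antilipschitzWith_iff_exists_mul_le_norm.mp ⟨K, hK⟩
  exact ⟨c, hc, fun x hx ↦ hcT ⟨x, hx⟩⟩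

lemma tendsto_landweberStep_iterate_of_mem_range [FiniteDimensional ℝ E] (hν : ‖T‖ ^ 2 ≤ ν)
    {x : E} (hx : x ∈ T.range) : Tendsto (fun t ↦ (landweberStep T ν)^[t] x) atTop (𝓝 0) := by
  rcases ((sq_nonneg _).trans hν).eq_or_lt with rfl | hν₀
  · obtain rfl : T = 0 :=
      norm_eq_zero.mp ((pow_eq_zero_iff two_ne_zero).mp (hν.antisymm (sq_nonneg _)))
    obtain ⟨_, rfl⟩ := hx
    simp
  obtain ⟨c, hc, hcT⟩ := exists_mul_norm_le_norm_adjoint_apply T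
  set ρ := 1 - ν⁻¹ * c ^ 2
  refine tendsto_iterate_zero_of_norm_le_mul (s := T.range) (ρ := √ρ)
    (fun _ ↦ landweberStep_mem_range) (fun y hy ↦ ?_) (Real.sqrt_nonneg _) ?_ hx
  · have hsq : ‖landweberStep T ν y‖ ^ 2 ≤ ρ * ‖y‖ ^ 2 := by
      have := mul_le_mul_of_nonneg_left (pow_le_pow_left₀ (by positivity) (hcT y hy) 2)
        (inv_nonneg.mpr hν₀.le)
      nlinarith [norm_landweberStep_sq_le hν y]
    rw [← Real.sqrt_sq (norm_nonneg y), ← Real.sqrt_mul' _ (sq_nonneg _)]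
    simpa using Real.abs_le_sqrt hsq
  · rw [Real.sqrt_lt' one_pos]
    have : 0 < ν⁻¹ * c ^ 2 := by positivity
    linarith

variable [T.range.HasOrthogonalProjection]

lemma landweberStep_iterate_apply (y : E) (t : ℕ) :
    (landweberStep T ν)^[t] y =
      (y - T.range.starProjection y) + (landweberStep T ν)^[t] (T.range.starProjection y) := by
  have hfix : Function.IsFixedPt (landweberStep T ν) (y - T.range.starProjection y) :=
    landweberStep_apply_of_mem_orthogonal (T.range.sub_starProjection_mem_orthogonal y)
  conv_lhs => rw [← sub_add_cancel y (T.range.starProjection y)]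
  rw [iterate_map_add, hfix.iterate t]

lemma norm_landweberStep_iterate_sq (y : E) (t : ℕ) :
    ‖(landweberStep T ν)^[t] y‖ ^ 2 = ‖y - T.range.starProjection y‖ ^ 2 +
      ‖(landweberStep T ν)^[t] (T.range.starProjection y)‖ ^ 2 := by
  have hrange : (landweberStep T ν)^[t] (T.range.starProjection y) ∈ T.range :=
    Set.MapsTo.iterate (fun _ ↦ landweberStep_mem_range) t (T.range.starProjection_apply_mem y)
  have hperp :=
    T.range.inner_left_of_mem_orthogonal hrange (T.range.sub_starProjection_mem_orthogonal y)
  rw [landweberStep_iterate_apply, norm_add_sq_real, hperp]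
  ring

lemma tendsto_norm_landweberStep_iterate_sq [FiniteDimensional ℝ E] (hν : ‖T‖ ^ 2 ≤ ν) (y : E) :
    Tendsto (fun t ↦ ‖(landweberStep T ν)^[t] y‖ ^ 2) atTop
      (𝓝 (‖y - T.range.starProjection y‖ ^ 2)) := by
  refine Tendsto.congr (fun t ↦ (norm_landweberStep_iterate_sq y t).symm) ?_
  simpa using ((tendsto_landweberStep_iterate_of_mem_range hν
    (T.range.starProjection_apply_mem y)).norm.pow 2).const_add _

end Landweber

section Matrix

open WithLp

variable {m n : Type*} [Fintype m] [Fintype n] [DecidableEq n]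

lemma opNorm_toEuclideanLin_le_specNorm (A : Matrix m n ℝ) :
    ‖(toEuclideanLin A).toContinuousLinearMap‖ ≤ specNorm A := by
  set T := (toEuclideanLin A).toContinuousLinearMap
  have hvalue : ∀ x : EuclideanSpace ℝ n, √(∑ i, (A *ᵥ ofLp x) i ^ 2) = ‖T x‖ := fun x ↦ by
    change √(∑ i, T x i ^ 2) = _
    rw [← EuclideanSpace.real_norm_sq_eq, Real.sqrt_sq (norm_nonneg _)]
  have hbdd : BddAbove (Set.range fun x : {x : n → ℝ // ∑ i, x i ^ 2 ≤ 1} ↦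
      √(∑ i, (A *ᵥ x.1) i ^ 2)) := by
    refine ⟨‖T‖, ?_⟩
    rintro _ ⟨⟨x, hx⟩, rfl⟩
    have hxn : ‖toLp 2 x‖ ≤ 1 := by
      rw [← sq_le_one_iff₀ (norm_nonneg _), EuclideanSpace.real_norm_sq_eq]
      exact hx
    calc √(∑ i, (A *ᵥ x) i ^ 2) = ‖T (toLp 2 x)‖ := hvalue _
      _ ≤ ‖T‖ * ‖toLp 2 x‖ := T.le_opNorm _
      _ ≤ ‖T‖ := mul_le_of_le_one_right (norm_nonneg _) hxn
  refine T.opNorm_le_of_unit_norm (Real.iSup_nonneg fun _ ↦ Real.sqrt_nonneg _) fun x hx ↦ ?_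
  have hx' : ∑ i, ofLp x i ^ 2 ≤ 1 := by
    rw [← EuclideanSpace.real_norm_sq_eq, hx, one_pow]
  rw [← hvalue]
  exact le_ciSup hbdd ⟨ofLp x, hx'⟩

lemma decErr_eq_norm_sub_starProjection_sq (A : Matrix m n ℝ) :
    decErr A = ‖toLp 2 1 -
      (toEuclideanLin A).toContinuousLinearMap.range.starProjection (toLp 2 1)‖ ^ 2 := by
  rw [← iInf_norm_apply_sub_sq, decErr,
    ← (PiLp.continuousLinearEquiv 2 ℝ (fun _ : n ↦ ℝ)).symm.surjective.iInf_comp]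
  congr 1
  ext x
  rw [EuclideanSpace.real_norm_sq_eq]
  rfl

lemma adjoint_toContinuousLinearMap_toEuclideanLin [DecidableEq m] (A : Matrix m n ℝ) :
    (toEuclideanLin A).toContinuousLinearMap† = (toEuclideanLin Aᵀ).toContinuousLinearMap := by
  rw [← LinearMap.adjoint_toContinuousLinearMap, ← toEuclideanLin_conjTranspose_eq_adjoint,
    conjTranspose_eq_transpose_of_trivial]

lemma landweberStep_toEuclideanLin_toLp [DecidableEq m] (A : Matrix m n ℝ) (ν : ℝ)
    (v : m → ℝ) : landweberStep (toEuclideanLin A).toContinuousLinearMap ν (toLp 2 v) =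
      toLp 2 (v - ν⁻¹ • (A * Aᵀ) *ᵥ v) := by
  rw [landweberStep_apply, adjoint_toContinuousLinearMap_toEuclideanLin, ← mulVec_mulVec]
  rfl

end Matrix

theorem stmt11 (k r : ℕ) (A : Matrix (Fin k) (Fin r) ℝ) (ν : ℝ)
    (hν : ν ≥ specNorm A ^ 2)
    (u : ℕ → Fin k → ℝ) (hu0 : u 0 = fun _ => 1)
    (hu : ∀ t, u (t + 1) = u t - ν⁻¹ • (A * Aᵀ).mulVec (u t)) :
    (∀ t, ∑ i, (u t i) ^ 2 ≥ decErr A) ∧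
    Filter.Tendsto (fun t => ∑ i, (u t i) ^ 2) Filter.atTop (nhds (decErr A)) := by
  set T := (toEuclideanLin A).toContinuousLinearMap
  have hT : ‖T‖ ^ 2 ≤ ν :=
    (pow_le_pow_left₀ (norm_nonneg _) (opNorm_toEuclideanLin_le_specNorm A) 2).trans hν
  have hiter : ∀ t, WithLp.toLp 2 (u t) = (landweberStep T ν)^[t] (WithLp.toLp 2 1) := by
    intro t
    induction t with
    | zero => rw [hu0]; rfl
    | succ t ih => rw [Function.iterate_succ_apply', ← ih, hu, landweberStep_toEuclideanLin_toLp]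
  have hnorm : ∀ t, ∑ i, u t i ^ 2 = ‖(landweberStep T ν)^[t] (WithLp.toLp 2 1)‖ ^ 2 := fun t ↦ by
    rw [← hiter, EuclideanSpace.real_norm_sq_eq]
  simp only [hnorm, decErr_eq_norm_sub_starProjection_sq]
  refine ⟨fun t ↦ ?_, tendsto_norm_landweberStep_iterate_sq hT _⟩
  rw [norm_landweberStep_iterate_sq]
  exact le_add_of_nonneg_right (sq_nonneg _)
end

section
/- Let A ∈ ℝ^{k×r} and ν ≥ ‖A‖₂² with ν > 0. If u lies in the column span of A, then ‖(I − AAᵀ/ν) u‖₂ ≤ (1 − σ_min(A)²/ν) ‖u‖₂, where σ_min(A) is the smallest nonzero singular value of A restricted appropriately (the smallest singular value associated to the column span). -/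
/-!
Write `M = 1 - ν⁻¹ A Aᵀ`. Since `‖Aᵀ‖ = ‖A‖ ≤ √ν`, `M` is positive semidefinite, and on the
column space of `A` (which `M` preserves) its quadratic form is at most `c = 1 - σ_min(A)² / ν`,
because `‖Aᵀ u‖ ≥ σ_min(A) ‖u‖` there. Cauchy–Schwarz for the semi-inner product `⟨x, M y⟩` gives
`‖M u‖⁴ = ⟨u, M (M u)⟩² ≤ ⟨u, M u⟩ ⟨M u, M (M u)⟩ ≤ c² ‖u‖² ‖M u‖²`, so `‖M u‖ ≤ c ‖u‖`.
-/

open Matrix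

/-- The smallest positive singular value of `A`: the infimum of `‖A x‖₂` over unit
vectors `x` in the row space of `A` (the orthogonal complement of the kernel). -/
noncomputable def sminPos {m n : Type*} [Fintype m] [Fintype n] (A : Matrix m n ℝ) : ℝ :=
  sInf {c : ℝ | ∃ x : n → ℝ, (∃ y : m → ℝ, x = Aᵀ.mulVec y) ∧ (∑ i, x i ^ 2 = 1) ∧
    c = Real.sqrt (∑ i, (A.mulVec x i) ^ 2)}

open scoped Matrix.Norms.L2Operator

variable {m n : Type*} [Fintype m] [Fintype n]

lemma sum_sq_eq_dotProduct_self (v : n → ℝ) : ∑ i, v i ^ 2 = v ⬝ᵥ v := by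
  simp only [dotProduct, sq]

lemma dotProduct_self_nonneg (v : n → ℝ) : 0 ≤ v ⬝ᵥ v := by
  simpa using dotProduct_star_self_nonneg v

lemma smul_dotProduct_smul_self (c : ℝ) (v : n → ℝ) : (c • v) ⬝ᵥ (c • v) = c ^ 2 * (v ⬝ᵥ v) := by
  simp only [smul_dotProduct, dotProduct_smul, smul_eq_mul]; ring

lemma sq_dotProduct_le (x y : n → ℝ) : (x ⬝ᵥ y) ^ 2 ≤ (x ⬝ᵥ x) * (y ⬝ᵥ y) := by
  simpa only [dotProduct, sq] using Finset.sum_mul_sq_le_sq_mul_sq Finset.univ x y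

theorem Matrix.IsHermitian.dotProduct_mulVec_comm {M : Matrix n n ℝ} (hM : M.IsHermitian)
    (x y : n → ℝ) : x ⬝ᵥ M *ᵥ y = M *ᵥ x ⬝ᵥ y := by
  rw [dotProduct_mulVec, ← mulVec_transpose, ← conjTranspose_eq_transpose_of_trivial, hM.eq]

theorem Matrix.PosSemidef.sq_dotProduct_mulVec_le {M : Matrix n n ℝ} (hM : M.PosSemidef)
    (x y : n → ℝ) : (x ⬝ᵥ M *ᵥ y) ^ 2 ≤ (x ⬝ᵥ M *ᵥ x) * (y ⬝ᵥ M *ᵥ y) := by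
  have hsymm : y ⬝ᵥ M *ᵥ x = x ⬝ᵥ M *ᵥ y := by
    rw [hM.1.dotProduct_mulVec_comm, dotProduct_comm]
  have hquad : ∀ t : ℝ,
      0 ≤ (y ⬝ᵥ M *ᵥ y) * (t * t) + 2 * (x ⬝ᵥ M *ᵥ y) * t + x ⬝ᵥ M *ᵥ x := fun t => by
    have := hM.dotProduct_mulVec_nonneg (x + t • y)
    simp only [star_trivial, mulVec_add, mulVec_smul, add_dotProduct, dotProduct_add,
      smul_dotProduct, dotProduct_smul, smul_eq_mul, hsymm] at this
    linarith
  have := discrim_le_zero hquad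
  rw [discrim] at this
  linarith

theorem Matrix.PosSemidef.sqrt_dotProduct_mulVec_le {M : Matrix n n ℝ} (hM : M.PosSemidef)
    {c : ℝ} {u : n → ℝ} (hu : u ⬝ᵥ M *ᵥ u ≤ c * (u ⬝ᵥ u))
    (hMu : (M *ᵥ u) ⬝ᵥ M *ᵥ (M *ᵥ u) ≤ c * ((M *ᵥ u) ⬝ᵥ (M *ᵥ u))) :
    √((M *ᵥ u) ⬝ᵥ (M *ᵥ u)) ≤ c * √(u ⬝ᵥ u) := by
  rcases (dotProduct_self_nonneg u).eq_or_lt with hu0 | hu0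
  · simp [dotProduct_self_eq_zero.1 hu0.symm]
  have hc : 0 ≤ c := by
    have := (hM.dotProduct_mulVec_nonneg u).trans (by simpa using hu)
    exact nonneg_of_mul_nonneg_left this hu0
  set v := M *ᵥ u
  have hv : v ⬝ᵥ v ≤ c ^ 2 * (u ⬝ᵥ u) := by
    have hCS := hM.sq_dotProduct_mulVec_le u v
    rw [hM.1.dotProduct_mulVec_comm] at hCS
    have hvMv : 0 ≤ v ⬝ᵥ M *ᵥ v := by simpa using hM.dotProduct_mulVec_nonneg v
    have h := hCS.trans (mul_le_mul hu hMu hvMv (by positivity))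
    rcases (dotProduct_self_nonneg v).eq_or_lt with hv0 | hv0
    · rw [← hv0]; positivity
    · exact le_of_mul_le_mul_right (by linarith) hv0
  calc √(v ⬝ᵥ v) ≤ √(c ^ 2 * (u ⬝ᵥ u)) := Real.sqrt_le_sqrt hv
    _ = c * √(u ⬝ᵥ u) := by rw [Real.sqrt_mul (sq_nonneg c), Real.sqrt_sq hc]

lemma specNorm_eq_l2_opNorm [DecidableEq n] (A : Matrix m n ℝ) : specNorm A = ‖A‖ := by
  rw [l2_opNorm_def, ← ContinuousLinearMap.sSup_unitClosedBall_eq_norm, specNorm, iSup]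
  congr 1
  ext c
  simpa [EuclideanSpace.norm_eq] using (WithLp.equiv 2 (n → ℝ)).symm.exists_congr_left

lemma specNorm_transpose (A : Matrix m n ℝ) : specNorm Aᵀ = specNorm A := by
  classical
  rw [specNorm_eq_l2_opNorm, specNorm_eq_l2_opNorm, ← conjTranspose_eq_transpose_of_trivial,
    l2_opNorm_conjTranspose]

lemma specNorm_nonneg (A : Matrix m n ℝ) : 0 ≤ specNorm A := by
  classical
  simp [specNorm_eq_l2_opNorm]

lemma dotProduct_mulVec_self_le_specNorm_sq (A : Matrix m n ℝ) (x : n → ℝ) :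
    (A *ᵥ x) ⬝ᵥ (A *ᵥ x) ≤ specNorm A ^ 2 * (x ⬝ᵥ x) := by
  classical
  have h : √((A *ᵥ x) ⬝ᵥ (A *ᵥ x)) ≤ specNorm A * √(x ⬝ᵥ x) := by
    simpa [EuclideanSpace.norm_eq, sum_sq_eq_dotProduct_self, specNorm_eq_l2_opNorm] using
      A.l2_opNorm_mulVec (WithLp.toLp 2 x)
  have hx := dotProduct_self_nonneg x
  rwa [← Real.sqrt_le_sqrt_iff (by positivity), Real.sqrt_mul' _ hx,
    Real.sqrt_sq (specNorm_nonneg A)]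

lemma sminPos_nonneg (A : Matrix m n ℝ) : 0 ≤ sminPos A :=
  Real.sInf_nonneg <| by rintro _ ⟨x, -, -, rfl⟩; positivity

lemma sminPos_le (A : Matrix m n ℝ) {x : n → ℝ} (hx : x ∈ Set.range Aᵀ.mulVec)
    (hx1 : x ⬝ᵥ x = 1) : sminPos A ≤ √((A *ᵥ x) ⬝ᵥ (A *ᵥ x)) := by
  obtain ⟨y, rfl⟩ := hx
  refine csInf_le ⟨0, ?_⟩ ⟨Aᵀ *ᵥ y, ⟨y, rfl⟩, ?_, ?_⟩
  · rintro _ ⟨x, -, -, rfl⟩; positivity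
  · rwa [sum_sq_eq_dotProduct_self]
  · rw [sum_sq_eq_dotProduct_self]

lemma sminPos_sq_mul_le (A : Matrix m n ℝ) {x : n → ℝ} (hx : x ∈ Set.range Aᵀ.mulVec) :
    sminPos A ^ 2 * (x ⬝ᵥ x) ≤ (A *ᵥ x) ⬝ᵥ (A *ᵥ x) := by
  rcases (dotProduct_self_nonneg x).eq_or_lt with hx0 | hx0
  · rw [← hx0, mul_zero]; exact dotProduct_self_nonneg _
  have hs : (√(x ⬝ᵥ x))⁻¹ ^ 2 = (x ⬝ᵥ x)⁻¹ := by rw [inv_pow, Real.sq_sqrt hx0.le]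
  have hunit : (√(x ⬝ᵥ x))⁻¹ • x ∈ Set.range Aᵀ.mulVec := by
    obtain ⟨y, rfl⟩ := hx; exact ⟨_ • y, mulVec_smul _ _ _⟩
  have h := sminPos_le A hunit (by rw [smul_dotProduct_smul_self, hs, inv_mul_cancel₀ hx0.ne'])
  rw [mulVec_smul, smul_dotProduct_smul_self, hs, Real.le_sqrt (sminPos_nonneg A)
    (mul_nonneg (inv_nonneg.2 hx0.le) (dotProduct_self_nonneg _)), le_inv_mul_iff₀ hx0] at h
  linarith

lemma range_mulVecLin_mul_transpose (A : Matrix m n ℝ) :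
    LinearMap.range (A * Aᵀ).mulVecLin = LinearMap.range A.mulVecLin := by
  refine Submodule.eq_of_le_of_finrank_eq ?_ (rank_self_mul_transpose A)
  rw [mulVecLin_mul]
  exact LinearMap.range_comp_le_range _ _

lemma sminPos_sq_mul_le_transpose (A : Matrix m n ℝ) {u : m → ℝ} (hu : u ∈ Set.range A.mulVec) :
    sminPos A ^ 2 * (u ⬝ᵥ u) ≤ (Aᵀ *ᵥ u) ⬝ᵥ (Aᵀ *ᵥ u) := by
  -- `u = A x` with `x` in the row space; then `‖u‖² = ⟨Aᵀ u, x⟩ ≤ ‖Aᵀ u‖ ‖x‖` and `σ ‖x‖ ≤ ‖u‖`.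
  obtain ⟨x, hx, rfl⟩ : ∃ x ∈ Set.range Aᵀ.mulVec, A *ᵥ x = u := by
    have : u ∈ LinearMap.range (A * Aᵀ).mulVecLin := by
      rw [range_mulVecLin_mul_transpose]; exact hu
    obtain ⟨z, rfl⟩ := this
    exact ⟨Aᵀ *ᵥ z, ⟨z, rfl⟩, mulVec_mulVec _ _ _⟩
  set w := A *ᵥ x
  have hdot : w ⬝ᵥ w = (Aᵀ *ᵥ w) ⬝ᵥ x := by rw [dotProduct_mulVec, ← mulVec_transpose]
  have hCS := sq_dotProduct_le (Aᵀ *ᵥ w) x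
  rw [← hdot] at hCS
  have hσ := sminPos_sq_mul_le A hx
  rcases (dotProduct_self_nonneg w).eq_or_lt with hw0 | hw0
  · rw [← hw0, mul_zero]; exact dotProduct_self_nonneg _
  refine le_of_mul_le_mul_right ?_ hw0
  linarith [mul_le_mul_of_nonneg_left hCS (sq_nonneg (sminPos A)),
    mul_le_mul_of_nonneg_left hσ (dotProduct_self_nonneg (Aᵀ *ᵥ w))]

section OneSubSmulMulTranspose

variable [DecidableEq m] (A : Matrix m n ℝ)

lemma dotProduct_one_sub_smul_mul_transpose_mulVec (s : ℝ) (x y : m → ℝ) :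
    x ⬝ᵥ (1 - s • (A * Aᵀ)) *ᵥ y = x ⬝ᵥ y - s * ((Aᵀ *ᵥ x) ⬝ᵥ (Aᵀ *ᵥ y)) := by
  rw [sub_mulVec, one_mulVec, smul_mulVec, ← mulVec_mulVec, dotProduct_sub, dotProduct_smul,
    dotProduct_mulVec x A, ← mulVec_transpose, smul_eq_mul]

lemma posSemidef_one_sub_smul_mul_transpose {ν : ℝ} (hν0 : 0 < ν) (hν : specNorm A ^ 2 ≤ ν) :
    (1 - ν⁻¹ • (A * Aᵀ)).PosSemidef := by
  refine .of_dotProduct_mulVec_nonneg ?_ fun x => ?_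
  · rw [IsHermitian, conjTranspose_eq_transpose_of_trivial, transpose_sub, transpose_one,
      transpose_smul, transpose_mul, transpose_transpose]
  · have h := dotProduct_mulVec_self_le_specNorm_sq Aᵀ x
    rw [specNorm_transpose] at h
    rw [star_trivial, dotProduct_one_sub_smul_mul_transpose_mulVec, sub_nonneg,
      inv_mul_le_iff₀ hν0]
    exact h.trans (mul_le_mul_of_nonneg_right hν (dotProduct_self_nonneg x))

lemma dotProduct_one_sub_smul_mul_transpose_mulVec_le {ν : ℝ} (hν : 0 ≤ ν) {u : m → ℝ}
    (hu : u ∈ Set.range A.mulVec) :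
    u ⬝ᵥ (1 - ν⁻¹ • (A * Aᵀ)) *ᵥ u ≤ (1 - sminPos A ^ 2 / ν) * (u ⬝ᵥ u) := by
  have h := mul_le_mul_of_nonneg_left (sminPos_sq_mul_le_transpose A hu) (inv_nonneg.2 hν)
  rw [dotProduct_one_sub_smul_mul_transpose_mulVec, div_eq_inv_mul]
  linarith

lemma one_sub_smul_mul_transpose_mulVec_mem_range (s : ℝ) {u : m → ℝ}
    (hu : u ∈ Set.range A.mulVec) : (1 - s • (A * Aᵀ)) *ᵥ u ∈ Set.range A.mulVec := by
  obtain ⟨y, rfl⟩ := hu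
  exact ⟨y - s • (Aᵀ *ᵥ A *ᵥ y), by
    rw [mulVec_sub, mulVec_smul, sub_mulVec, one_mulVec, smul_mulVec, ← mulVec_mulVec]⟩

end OneSubSmulMulTranspose

theorem stmt12 (k r : ℕ) (A : Matrix (Fin k) (Fin r) ℝ) (ν : ℝ)
    (hν : ν ≥ specNorm A ^ 2) (hν0 : 0 < ν)
    (u : Fin k → ℝ) (hu : ∃ y : Fin r → ℝ, u = A.mulVec y) :
    Real.sqrt (∑ i, ((u - ν⁻¹ • (A * Aᵀ).mulVec u) i) ^ 2)
      ≤ (1 - sminPos A ^ 2 / ν) * Real.sqrt (∑ i, (u i) ^ 2) := by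
  set M : Matrix (Fin k) (Fin k) ℝ := 1 - ν⁻¹ • (A * Aᵀ)
  have hMu : u - ν⁻¹ • (A * Aᵀ) *ᵥ u = M *ᵥ u := by
    rw [sub_mulVec, one_mulVec, smul_mulVec]
  have hu' : u ∈ Set.range A.mulVec := let ⟨y, hy⟩ := hu; ⟨y, hy.symm⟩
  rw [sum_sq_eq_dotProduct_self, sum_sq_eq_dotProduct_self, hMu]
  exact (posSemidef_one_sub_smul_mul_transpose A hν0 hν).sqrt_dotProduct_mulVec_le
    (dotProduct_one_sub_smul_mul_transpose_mulVec_le A hν0.le hu')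
    (dotProduct_one_sub_smul_mul_transpose_mulVec_le A hν0.le
      (one_sub_smul_mul_transpose_mulVec_mem_range A _ hu'))
end

section
/- For the fractional repetition code G_frac (k×k block-diagonal with k/s all-ones blocks, s ∣ k, s ∣ r), the worst case over all choices of r non-straggler columns of the optimal decoding error is exactly k − r; i.e., max over k×r column-submatrices A of G_frac of err(A) = k − r, attained by choosing all non-stragglers from r/s complete blocks. -/
/-!
Spreading the weight `1 / c` over the `c` chosen columns of a block reproduces the all-ones
vector exactly on the rows of that block, so the error is at most the number of rows whose
block contains no chosen column; such rows are themselves not chosen, whence `err ≤ k − r`.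
If the chosen columns fill `r / s` whole blocks, the `k − r` remaining rows of the submatrix
vanish and each contributes `1` to the residual of every `x`.
-/

open Finset Matrix

section DecodingError

variable {m n : Type*} [Fintype m] [Fintype n]

theorem decErr_le (A : Matrix m n ℝ) (x : n → ℝ) : decErr A ≤ ∑ i, ((A *ᵥ x) i - 1) ^ 2 :=
  ciInf_le ⟨0, by rintro _ ⟨y, rfl⟩; positivity⟩ x

theorem card_le_decErr_of_forall_eq_zero (A : Matrix m n ℝ) (T : Finset m)
    (hT : ∀ i ∈ T, ∀ j, A i j = 0) : (#T : ℝ) ≤ decErr A := by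
  refine le_ciInf fun x => ?_
  have hrow : ∀ i ∈ T, ((A *ᵥ x) i - 1) ^ 2 = 1 := fun i hi => by
    simp [mulVec, dotProduct, hT i hi]
  calc (#T : ℝ) = ∑ i ∈ T, ((A *ᵥ x) i - 1) ^ 2 := by simp [sum_congr rfl hrow]
    _ ≤ ∑ i, ((A *ᵥ x) i - 1) ^ 2 :=
      sum_le_sum_of_subset_of_nonneg (subset_univ T) fun i _ _ => by positivity

end DecodingError

section BlockMatrix

variable {m n β : Type*} [Fintype n] [DecidableEq β]

def blockIndicator (f : m → β) (g : n → β) : Matrix m n ℝ :=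
  fun i j => if f i = g j then 1 else 0

theorem blockIndicator_mulVec_inv_card (f : m → β) (g : n → β) (i : m) :
    (blockIndicator f g *ᵥ fun j => (#{j' | g j' = g j} : ℝ)⁻¹) i =
      if ∀ j, g j ≠ f i then 0 else 1 := by
  have hsum : (blockIndicator f g *ᵥ fun j => (#{j' | g j' = g j} : ℝ)⁻¹) i =
      #{j | g j = f i} * (#{j | g j = f i} : ℝ)⁻¹ := by
    simp only [mulVec, dotProduct, blockIndicator, ite_mul, one_mul, zero_mul]
    rw [← sum_filter, sum_congr rfl fun j hj => by rw [← (mem_filter.mp hj).2], sum_const,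
      nsmul_eq_mul]
    simp_rw [eq_comm (a := f i)]
  rw [hsum]
  split_ifs with h
  · simp [card_filter_eq_zero_iff.mpr fun j _ => h j]
  · refine mul_inv_cancel₀ ?_
    obtain ⟨j, hj⟩ := not_forall_not.mp h
    exact Nat.cast_ne_zero.mpr (card_ne_zero_of_mem (mem_filter.mpr ⟨mem_univ j, hj⟩))

theorem decErr_blockIndicator_le [Fintype m] (f : m → β) (g : n → β) :
    decErr (blockIndicator f g) ≤ #{i | ∀ j, g j ≠ f i} := by
  refine (decErr_le _ fun j => (#{j' | g j' = g j} : ℝ)⁻¹).trans_eq ?_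
  simp only [blockIndicator_mulVec_inv_card]
  rw [card_filter, Nat.cast_sum]
  refine sum_congr rfl fun i _ => ?_
  split_ifs <;> norm_num

theorem decErr_blockIndicator_subtype_le_card_compl [Fintype m] [DecidableEq m] (f : m → β)
    (S : Finset m) : decErr (blockIndicator f fun j : S => f j) ≤ #Sᶜ := by
  refine (decErr_blockIndicator_le _ _).trans (Nat.cast_le.mpr (card_le_card fun i hi => ?_))
  exact mem_compl.mpr fun hiS => (mem_filter.mp hi).2 ⟨i, hiS⟩ rfl

end BlockMatrix

theorem stmt19_general (k s r : ℕ) (hdr : s ∣ r) (hrk : r ≤ k)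
    (G : Matrix (Fin k) (Fin k) ℝ)
    (hG : ∀ i j, G i j = if (i : ℕ) / s = (j : ℕ) / s then 1 else 0) :
    (∀ S ∈ (Finset.univ : Finset (Fin k)).powersetCard r,
        decErr (fun (i : Fin k) (j : {x : Fin k // x ∈ S}) => G i j.1) ≤ (k : ℝ) - r) ∧
    (∃ S ∈ (Finset.univ : Finset (Fin k)).powersetCard r,
        decErr (fun (i : Fin k) (j : {x : Fin k // x ∈ S}) => G i j.1) = (k : ℝ) - r) := by
  have hk (S : Finset (Fin k)) : (#Sᶜ : ℝ) + #S = k := by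
    exact_mod_cast S.card_compl_add_card.trans (Fintype.card_fin k)
  have hub : ∀ S ∈ (univ : Finset (Fin k)).powersetCard r,
      decErr (fun (i : Fin k) (j : {x : Fin k // x ∈ S}) => G i j.1) ≤ (k : ℝ) - r := by
    intro S hS
    have hA : (fun (i : Fin k) (j : {x : Fin k // x ∈ S}) => G i j.1) =
        blockIndicator (fun i : Fin k => (i : ℕ) / s) fun j : S => (j.1 : ℕ) / s := by
      ext i j; simp [hG, blockIndicator]
    rw [hA, ← (mem_powersetCard.mp hS).2]
    linarith [decErr_blockIndicator_subtype_le_card_compl (fun i : Fin k => (i : ℕ) / s) S, hk S]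
  set S : Finset (Fin k) := {i | (i : ℕ) < r}
  have hS : S ∈ (univ : Finset (Fin k)).powersetCard r :=
    mem_powersetCard.mpr ⟨subset_univ S, by rw [Fin.card_filter_val_lt, min_eq_right hrk]⟩
  refine ⟨hub, S, hS, le_antisymm (hub S hS) ?_⟩
  -- Columns of `S` lie in the first `r / s` blocks, rows outside `S` in the later ones.
  have hzero : ∀ i ∈ Sᶜ, ∀ j : S, G i j.1 = 0 := by
    intro i hi j
    have hjb : (j.1 : ℕ) / s < r / s := Nat.div_lt_div_of_lt_of_dvd hdr (mem_filter.mp j.2).2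
    have hib : r / s ≤ (i : ℕ) / s := Nat.div_le_div_right (by simpa [S] using hi)
    simp [hG, show (i : ℕ) / s ≠ (j.1 : ℕ) / s by omega]
  rw [← (mem_powersetCard.mp hS).2]
  linarith [card_le_decErr_of_forall_eq_zero _ _ hzero, hk S]

theorem stmt19 (k s r : ℕ) (hs : 0 < s) (hdk : s ∣ k) (hdr : s ∣ r) (hrk : r ≤ k)
    (G : Matrix (Fin k) (Fin k) ℝ)
    (hG : ∀ i j, G i j = if (i : ℕ) / s = (j : ℕ) / s then 1 else 0) :
    (∀ S ∈ (Finset.univ : Finset (Fin k)).powersetCard r,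
        decErr (fun (i : Fin k) (j : {x : Fin k // x ∈ S}) => G i j.1) ≤ (k : ℝ) - r) ∧
    (∃ S ∈ (Finset.univ : Finset (Fin k)).powersetCard r,
        decErr (fun (i : Fin k) (j : {x : Fin k // x ∈ S}) => G i j.1) = (k : ℝ) - r) :=
  stmt19_general k s r hdr hrk G hG
end
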